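/- Closed form for odd-index generating functions: for every natural number n and every real t with −1 ≤ t ≤ 1, φ_{2n+1}(t) = (1+t²)^n · (√(1+t²) + t·∑_{k=0}^{n} (C(2k,k)/4^k)·(1+t²)^{−k}). -/

import Mathlib

open scoped Real Classical

/-- The generalized β-binomial coefficient `[n k]_β`:
`Γ(βn+1)/(Γ(βk+1)·Γ(β(n−k)+1))` when `β(n−k)` is not an integer `≤ -1`, else `0`. -/
noncomputable def bbinom (β : ℝ) (n : ℕ) (k : ℤ) : ℝ :=
  if ∃ m : ℤ, m ≤ -1 ∧ β * ((n : ℝ) - (k : ℝ)) = (m : ℝ) then 0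
  else Real.Gamma (β * n + 1) /
    (Real.Gamma (β * k + 1) * Real.Gamma (β * ((n : ℝ) - (k : ℝ)) + 1))

/-- The 1/2-binomial coefficient. -/
noncomputable def bhalf (n : ℕ) (k : ℤ) : ℝ := bbinom (1/2) n k

/-- The generating function φ_n(t) = ∑_{k=0}^∞ [n k] t^k. -/
noncomputable def phi (n : ℕ) (t : ℝ) : ℝ := ∑' k : ℕ, bhalf n (k : ℤ) * t ^ k

/-!
Write `[n k] = Γ(n/2+1) / (Γ(k/2+1) Γ((n-k)/2+1))`, reading `1/Γ` as `0` at the poles (which is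
what Mathlib's `Γ` does, and which makes the case distinction in the definition automatic). The
recurrence of `Γ` gives the Pascal rule `[n+2 k] = [n k] + [n k-2]`, hence
`φ_{n+2}(t) = (1 + t²) φ_n(t) + [n -1] t + [n -2]`. For odd `n = 2m+1` the boundary terms are
`[n -2] = 0` and `[n -1] = C(2m+2, m+1) / 4^(m+1)`, so the claim follows by induction on `m` from
`φ_1(t) = √(1 + t²) + t`. There the even coefficients are `binom(1/2, j)`, the odd ones vanish
except `[1 1] = 1`, and the binomial series of `√(1 + x)` still converges at `x = 1` because
`|binom(1/2, j+1)| = c_j - c_{j+1}` with `c_j = C(2j, j) / 4^j` telescopes; Abel's theorem then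
identifies its sum.
-/

/-- Valid also at the poles, where Mathlib's `Γ` is `0`. -/
theorem Real.inv_Gamma_eq_mul_inv_Gamma_add_one (s : ℝ) :
    (Real.Gamma s)⁻¹ = s * (Real.Gamma (s + 1))⁻¹ := by
  rcases ne_or_eq s 0 with hs | rfl
  · rw [Real.Gamma_add_one hs, mul_inv, mul_inv_cancel_left₀ hs]
  · rw [zero_add, Real.Gamma_zero, inv_zero, zero_mul]

theorem centralBinom_succ_div_four_pow (j : ℕ) :
    ((j + 1).centralBinom : ℝ) / 4 ^ (j + 1) =
      j.centralBinom / 4 ^ j * ((2 * j + 1) / (2 * j + 2)) := by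
  have hrec : ((j : ℝ) + 1) * (j + 1).centralBinom = 2 * (2 * j + 1) * j.centralBinom := by
    exact_mod_cast Nat.succ_mul_centralBinom_succ j
  field_simp
  linear_combination (4 : ℝ) ^ j * 2 * hrec

theorem Real.Gamma_nat_add_half_eq_centralBinom (m : ℕ) :
    Real.Gamma (m + 1 / 2) = m.centralBinom / 4 ^ m * m.factorial * √π := by
  induction m with
  | zero => simp [-one_div, Real.Gamma_one_half_eq]
  | succ m ih =>
    rw [Nat.cast_succ, add_right_comm, Real.Gamma_add_one (by positivity), ih,
      centralBinom_succ_div_four_pow, Nat.factorial_succ, Nat.cast_mul, Nat.cast_succ]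
    field_simp

theorem Ring.natCast_succ_mul_choose_succ {K : Type*} [Field K] [CharZero K] (a : K) (k : ℕ) :
    ((k : K) + 1) * Ring.choose a (k + 1) = (a - k) * Ring.choose a k := by
  simp only [Ring.choose_eq_smul, smul_eq_mul, ← Polynomial.aeval_eq_smeval, Polynomial.aeval_def,
    ← Polynomial.eval_map, descPochhammer_map, descPochhammer_succ_eval, Nat.factorial_succ]
  push_cast
  field_simp

theorem Ring.choose_half_succ (j : ℕ) :
    Ring.choose (1 / 2 : ℝ) (j + 1) =
      (-1) ^ j * (j.centralBinom / 4 ^ j - (j + 1).centralBinom / 4 ^ (j + 1)) := by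
  induction j with
  | zero => norm_num [Ring.choose_one_right, Nat.centralBinom]
  | succ j ih =>
    have hrec := Ring.natCast_succ_mul_choose_succ (1 / 2 : ℝ) (j + 1)
    rw [ih] at hrec
    rw [centralBinom_succ_div_four_pow (j + 1), centralBinom_succ_div_four_pow j]
    rw [centralBinom_succ_div_four_pow j] at hrec
    push_cast at hrec ⊢
    field_simp at hrec ⊢
    rw [hrec]
    ring

theorem Ring.abs_choose_half_succ (j : ℕ) :
    |Ring.choose (1 / 2 : ℝ) (j + 1)| =
      j.centralBinom / 4 ^ j - (j + 1).centralBinom / 4 ^ (j + 1) := by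
  have hdecr : ((j + 1).centralBinom : ℝ) / 4 ^ (j + 1) ≤ j.centralBinom / 4 ^ j := by
    rw [centralBinom_succ_div_four_pow]
    exact mul_le_of_le_one_right (by positivity) ((div_le_one (by positivity)).2 (by linarith))
  rw [Ring.choose_half_succ, abs_mul, abs_pow, abs_neg, abs_one, one_pow, one_mul,
    abs_of_nonneg (sub_nonneg.2 hdecr)]

theorem Ring.summable_choose_half : Summable (Ring.choose (1 / 2 : ℝ)) := by
  rw [← summable_nat_add_iff 1]
  refine Summable.of_norm ?_
  simp only [Real.norm_eq_abs, Ring.abs_choose_half_succ]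
  refine summable_of_sum_range_le (c := 1)
    (fun j => Ring.abs_choose_half_succ j ▸ abs_nonneg _) fun n => ?_
  rw [Finset.sum_range_sub' (fun j => (j.centralBinom : ℝ) / 4 ^ j)]
  simp only [Nat.centralBinom_zero, Nat.cast_one, pow_zero, div_one]
  linarith [show (0 : ℝ) ≤ n.centralBinom / 4 ^ n by positivity]

theorem Real.hasSum_choose_mul_pow {a x : ℝ} (hx : |x| < 1) :
    HasSum (fun n => Ring.choose a n * x ^ n) ((1 + x) ^ a) := by
  have h := Real.one_add_rpow_hasFPowerSeriesOnBall_zero (a := a).hasSum (y := x)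
    (by simpa [edist_zero_right, ← ofReal_norm] using hx)
  simpa [binomialSeries, FormalMultilinearSeries.ofScalars_apply_eq, mul_comm] using h

open Filter Topology in
/-- Abel's limit theorem extends the binomial series to `x = 1` whenever it converges there. -/
theorem Real.hasSum_choose_of_summable {a : ℝ} (h : Summable (Ring.choose a)) :
    HasSum (Ring.choose a) (2 ^ a) := by
  have habel := Real.tendsto_tsum_powerSeries_nhdsWithin_lt h.hasSum.tendsto_sum_nat
  have hlim : Tendsto (fun x : ℝ => (1 + x) ^ a) (𝓝[<] 1) (𝓝 (2 ^ a)) := by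
    have hcont : ContinuousAt (fun x : ℝ => (1 + x) ^ a) 1 :=
      (continuousAt_const.add continuousAt_id).rpow_const (Or.inl (by norm_num))
    simpa [one_add_one_eq_two] using hcont.tendsto.mono_left nhdsWithin_le_nhds
  have heq : (fun x : ℝ => ∑' n, Ring.choose a n * x ^ n) =ᶠ[𝓝[<] 1]
      fun x => (1 + x) ^ a := by
    filter_upwards [Ioo_mem_nhdsLT (show (0 : ℝ) < 1 by norm_num)] with x hx
    exact (Real.hasSum_choose_mul_pow (abs_lt.2 ⟨by linarith [hx.1], hx.2⟩)).tsum_eq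
  rw [← tendsto_nhds_unique habel (hlim.congr' heq.symm)]
  exact h.hasSum

theorem Real.hasSum_choose_half_mul_pow {x : ℝ} (hx0 : -1 < x) (hx1 : x ≤ 1) :
    HasSum (fun j => Ring.choose (1 / 2 : ℝ) j * x ^ j) (√(1 + x)) := by
  rw [Real.sqrt_eq_rpow]
  rcases hx1.lt_or_eq with hx1 | rfl
  · exact Real.hasSum_choose_mul_pow (abs_lt.2 ⟨hx0, hx1⟩)
  · simpa [one_add_one_eq_two] using Real.hasSum_choose_of_summable Ring.summable_choose_half

noncomputable def gammaBinom (x y : ℝ) : ℝ :=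
  Real.Gamma (x + 1) / (Real.Gamma (y + 1) * Real.Gamma (x - y + 1))

theorem gammaBinom_add_one {x : ℝ} (hx : x + 1 ≠ 0) (y : ℝ) :
    gammaBinom (x + 1) y = gammaBinom x y + gammaBinom x (y - 1) := by
  simp only [gammaBinom, div_eq_mul_inv, mul_inv, sub_add_cancel, Real.Gamma_add_one hx]
  rw [Real.inv_Gamma_eq_mul_inv_Gamma_add_one (x - y + 1),
    Real.inv_Gamma_eq_mul_inv_Gamma_add_one y, show x - (y - 1) + 1 = x - y + 1 + 1 by ring,
    show x + 1 - y + 1 = x - y + 1 + 1 by ring]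
  ring

theorem gammaBinom_natCast {x : ℝ} (hx : Real.Gamma (x + 1) ≠ 0) (k : ℕ) :
    gammaBinom x k = Ring.choose x k := by
  induction k with
  | zero => simp [gammaBinom, hx]
  | succ k ih =>
    have hk : (k : ℝ) + 1 ≠ 0 := by positivity
    refine mul_left_cancel₀ hk ?_
    rw [Ring.natCast_succ_mul_choose_succ, ← ih]
    simp only [gammaBinom, div_eq_mul_inv, mul_inv, Nat.cast_succ, Real.Gamma_add_one hk]
    rw [Real.inv_Gamma_eq_mul_inv_Gamma_add_one (x - (k + 1) + 1),
      show x - (k + 1) + 1 + 1 = x - k + 1 by ring]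
    field_simp
    ring

theorem bbinom_eq_gammaBinom (β : ℝ) (n : ℕ) (k : ℤ) :
    bbinom β n k = gammaBinom (β * n) (β * k) := by
  rw [bbinom, gammaBinom, ← mul_sub]
  split_ifs with h
  · obtain ⟨m, hm, he⟩ := h
    have hpole : Real.Gamma (β * (n - k) + 1) = 0 := by
      rw [he, Real.Gamma_eq_zero_iff]
      obtain ⟨j, hj⟩ := Int.exists_eq_neg_ofNat (show m + 1 ≤ 0 by omega)
      exact ⟨j, by exact_mod_cast hj⟩
    rw [hpole, mul_zero, div_zero]
  · rfl

theorem bhalf_eq_gammaBinom (n : ℕ) (k : ℤ) : bhalf n k = gammaBinom (n / 2) (k / 2) := by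
  rw [bhalf, bbinom_eq_gammaBinom]
  ring_nf

theorem bhalf_add_two (n : ℕ) (k : ℤ) : bhalf (n + 2) k = bhalf n k + bhalf n (k - 2) := by
  simp only [bhalf_eq_gammaBinom]
  convert gammaBinom_add_one (x := n / 2) (by positivity) (k / 2) using 2
  · push_cast; ring
  · congr 1; push_cast; ring

theorem bhalf_neg_two (n : ℕ) : bhalf n (-2) = 0 := by
  rw [bhalf_eq_gammaBinom, gammaBinom]
  norm_num

theorem bhalf_odd_neg_one (m : ℕ) :
    bhalf (2 * m + 1) (-1) = (m + 1).centralBinom / 4 ^ (m + 1) := by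
  rw [bhalf_eq_gammaBinom, gammaBinom]
  push_cast
  rw [show (2 * m + 1 : ℝ) / 2 + 1 = ((m + 1 : ℕ) : ℝ) + 1 / 2 by push_cast; ring,
    show (-1 : ℝ) / 2 + 1 = 1 / 2 by norm_num,
    show (2 * m + 1 : ℝ) / 2 - -1 / 2 + 1 = ((m + 1 : ℕ) : ℝ) + 1 by push_cast; ring,
    Real.Gamma_nat_add_half_eq_centralBinom, Real.Gamma_one_half_eq, Real.Gamma_nat_eq_factorial]
  field_simp

theorem bhalf_one_two_mul (j : ℕ) : bhalf 1 (2 * j : ℕ) = Ring.choose (1 / 2 : ℝ) j := by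
  rw [bhalf_eq_gammaBinom, ← gammaBinom_natCast (Real.Gamma_pos_of_pos (by norm_num)).ne']
  push_cast
  ring_nf

theorem bhalf_one_two_mul_add_one (j : ℕ) :
    bhalf 1 (2 * j + 1 : ℕ) = if j = 0 then 1 else 0 := by
  rw [bhalf_eq_gammaBinom, gammaBinom]
  split_ifs with hj
  · subst hj
    norm_num
    exact (Real.Gamma_pos_of_pos (by norm_num)).ne'
  · obtain ⟨i, rfl⟩ := Nat.exists_eq_add_one_of_ne_zero hj
    have hpole : Real.Gamma (1 / 2 - (2 * ((i : ℝ) + 1) + 1) / 2 + 1) = 0 := by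
      rw [← Real.Gamma_neg_nat_eq_zero i]
      ring_nf
    push_cast
    rw [hpole, mul_zero, div_zero]

theorem hasSum_phi_add_two {n : ℕ} {t s : ℝ} (h : HasSum (fun k : ℕ => bhalf n k * t ^ k) s) :
    HasSum (fun k : ℕ => bhalf (n + 2) k * t ^ k)
      ((1 + t ^ 2) * s + bhalf n (-1) * t + bhalf n (-2)) := by
  have htail :
      HasSum (fun k : ℕ => bhalf n (((k + 2 : ℕ) : ℤ) - 2) * t ^ (k + 2)) (t ^ 2 * s) :=
    (h.mul_left (t ^ 2)).congr_fun fun k => by push_cast; rw [add_sub_cancel_right]; ring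
  have hshift :=
    (hasSum_nat_add_iff (f := fun k : ℕ => bhalf n ((k : ℤ) - 2) * t ^ k) 2).mp htail
  norm_num [Finset.sum_range_succ] at hshift
  convert h.add hshift using 1
  · ext k
    rw [bhalf_add_two, add_mul]
  · ring

theorem hasSum_phi_one {t : ℝ} (ht : |t| ≤ 1) :
    HasSum (fun k : ℕ => bhalf 1 k * t ^ k) (√(1 + t ^ 2) + t) := by
  refine HasSum.even_add_odd ?_ ?_
  · simp only [bhalf_one_two_mul, pow_mul]
    exact Real.hasSum_choose_half_mul_pow (neg_one_lt_zero.trans_le (sq_nonneg t))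
      ((sq_le_one_iff_abs_le_one t).2 ht)
  · simp only [bhalf_one_two_mul_add_one, ite_mul, one_mul, zero_mul]
    convert hasSum_ite_eq 0 t using 2 with j
    split_ifs with hj <;> simp [hj]

theorem hasSum_phi_odd (n : ℕ) {t : ℝ} (ht : |t| ≤ 1) :
    HasSum (fun k : ℕ => bhalf (2 * n + 1) k * t ^ k)
      ((1 + t ^ 2) ^ n * (√(1 + t ^ 2) +
        t * ∑ k ∈ Finset.range (n + 1),
          (k.centralBinom : ℝ) / 4 ^ k * ((1 + t ^ 2) ^ k)⁻¹)) := by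
  induction n with
  | zero => simpa using hasSum_phi_one ht
  | succ m ih =>
    rw [show 2 * (m + 1) + 1 = 2 * m + 1 + 2 by ring]
    convert hasSum_phi_add_two ih using 1
    rw [bhalf_neg_two, bhalf_odd_neg_one, Finset.sum_range_succ]
    have hu : (1 + t ^ 2) ^ (m + 1) ≠ 0 := by positivity
    field_simp
    ring

theorem phi_odd_closed_form (n : ℕ) (t : ℝ) (ht1 : -1 ≤ t) (ht2 : t ≤ 1) :
    phi (2 * n + 1) t = (1 + t ^ 2) ^ n *
      (Real.sqrt (1 + t ^ 2) +
        t * ∑ k ∈ Finset.range (n + 1),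
          ((Nat.choose (2 * k) k : ℝ) / 4 ^ k) * ((1 + t ^ 2) ^ k)⁻¹) := by
  simpa only [phi, Nat.centralBinom_eq_two_mul_choose] using
    (hasSum_phi_odd n (abs_le.2 ⟨ht1, ht2⟩)).tsum_eq
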